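/- (Theorem 1, statement 4, injectivity.) The map (z,φ,g) ↦ G_z(φ,g) is one-to-one on the set of triples with z ∈ Ξ, φ ∈ Φ, g ∈ Δ_z and (φ,g) ≠ (0,0): if G_z(φ,g) = G_{z'}(φ',g') with (φ,g) ≠ (0,0) and (φ',g') ≠ (0,0), then z = z', φ = φ' and g = g'. -/

import Mathlib

open Polynomial Matrix

noncomputable section

/-- The matrix `D = diag(-1,1,...,1)` of size `ν × ν` with `ν = n + 2`. -/
def Dm (n : ℕ) : Matrix (Fin (n + 2)) (Fin (n + 2)) ℂ :=
  Matrix.diagonal fun i => if i = 0 then -1 else 1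

/-- Coefficientwise complex conjugation of a scalar polynomial (`ω` treated as real). -/
def cstar (p : ℂ[X]) : ℂ[X] := p.map (starRingEnd ℂ)

/-- Polynomial matrices of size `(n+2) × (n+2)`. -/
abbrev PM (n : ℕ) := Matrix (Fin (n + 2)) (Fin (n + 2)) ℂ[X]

/-- `U(ω)* = Σ Uι* ωⁱ` : coefficientwise conjugate transpose of a polynomial matrix. -/
def Mstar (n : ℕ) (U : PM n) : PM n := Matrix.of fun i j => cstar (U j i)

/-- The scalar polynomial `g(ω)* h(ω)` for vector polynomials `g, h`. -/
def pdot (n : ℕ) (g h : Fin (n + 2) → ℂ[X]) : ℂ[X] := ∑ i, cstar (g i) * h i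

/-- `Ξ = {z : z₁ = 1, z* D z = 0}`. -/
def Xi (n : ℕ) : Set (Fin (n + 2) → ℂ) :=
  {z | z 0 = 1 ∧ star z ⬝ᵥ (Dm n).mulVec z = 0}

/-- `Δ_z⁰ = {d : d* z = d* D z = 0}`. -/
def Delta0 (n : ℕ) (z : Fin (n + 2) → ℂ) : Set (Fin (n + 2) → ℂ) :=
  {d | star d ⬝ᵥ z = 0 ∧ star d ⬝ᵥ (Dm n).mulVec z = 0}

/-- `Φ = {φ : φ(0) = 0, φ* = -φ}`. -/
def Phi : Set ℂ[X] := {φ | φ.eval 0 = 0 ∧ cstar φ = -φ}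

/-- `Δ_z` : vector polynomials vanishing at 0 with all coefficient vectors in `Δ_z⁰`. -/
def DeltaZ (n : ℕ) (z : Fin (n + 2) → ℂ) : Set (Fin (n + 2) → ℂ[X]) :=
  {g | (∀ i, (g i).eval 0 = 0) ∧ ∀ k : ℕ, (fun i => (g i).coeff k) ∈ Delta0 n z}

/-- `G_z(φ,g) = D·[z(φ - (1/2)g*g)z* + (zg* - gz*)] + I`. -/
def Gmat (n : ℕ) (z : Fin (n + 2) → ℂ) (φ : ℂ[X]) (g : Fin (n + 2) → ℂ[X]) : PM n :=
  (Dm n).map Polynomial.C *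
      Matrix.of (fun i j =>
        Polynomial.C (z i) * (φ - Polynomial.C (1 / 2 : ℂ) * pdot n g g) *
            Polynomial.C (star (z j)) +
          (Polynomial.C (z i) * cstar (g j) - g i * Polynomial.C (star (z j)))) +
    1

/-- `M` : the group of polynomial matrices with `U(ω) D U(ω)* = D`. -/
def MM (n : ℕ) : Set (PM n) :=
  {U | U * (Dm n).map Polynomial.C * Mstar n U = (Dm n).map Polynomial.C}

/-- `M₀ = {U ∈ M : U(0) = I}`. -/
def M0 (n : ℕ) : Set (PM n) :=
  {U | U ∈ MM n ∧ U.map (fun p => p.eval 0) = 1}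

/-- `M_z = {G_z(φ,g) : φ ∈ Φ, g ∈ Δ_z}`. -/
def Mz (n : ℕ) (z : Fin (n + 2) → ℂ) : Set (PM n) :=
  {U | ∃ φ ∈ Phi, ∃ g ∈ DeltaZ n z, U = Gmat n z φ g}

/-- `Ψ_z = {G_z(φ,0) : φ ∈ Φ}`. -/
def Psi (n : ℕ) (z : Fin (n + 2) → ℂ) : Set (PM n) :=
  {U | ∃ φ ∈ Phi, U = Gmat n z φ 0}

/-- Degree of a polynomial matrix: the largest `ι` with a nonzero coefficient `ω^ι`. -/
def degPM (n : ℕ) (U : PM n) : ℕ :=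
  Finset.univ.sup fun p : Fin (n + 2) × Fin (n + 2) => (U p.1 p.2).natDegree

/-! Since `D² = I`, `G_z(φ,g)` determines `K = zψz* + zg* − gz*` with `ψ = φ − g*g/2`, and for
`z ∈ Ξ`, `g ∈ Δ_z` this `K` annihilates `Dz`. Reading one matrix `K` both as `K_z(ψ,g)` and as
`K_{z'}(ψ',g')`, the vector `K Dz' = 0` forces `z* D z' = 0`: look at row `0` if `g = 0`, and
otherwise pair with `g`, using `g*g ≠ 0`. Two `D`-null vectors with first coordinate `1` that are
`D`-orthogonal coincide, so `z = z'`. Finally `K z = |z|² (ψz − g)` recovers `ψz − g`, whose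
pairing with `z` is `ψ|z|²`. -/

section

variable {n : ℕ}

open scoped ComplexOrder

lemma cstar_C (a : ℂ) : cstar (C a) = C (star a) := Polynomial.map_C _

lemma eval_ofReal_cstar (p : ℂ[X]) (x : ℝ) : (cstar p).eval (x : ℂ) = star (p.eval (x : ℂ)) := by
  simpa [cstar, eval_map] using eval₂_hom (p := p) (starRingEnd ℂ) (x : ℂ)

lemma pdot_eq_dotProduct (g h : Fin (n + 2) → ℂ[X]) : pdot n g h = (cstar ∘ g) ⬝ᵥ h := rfl

lemma cstar_pdot (g h : Fin (n + 2) → ℂ[X]) : cstar (pdot n g h) = pdot n h g := by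
  simp [pdot, cstar, Polynomial.map_sum, Polynomial.map_map, mul_comm]

lemma pdot_C_comp (u v : Fin (n + 2) → ℂ) : pdot n (C ∘ u) (C ∘ v) = C (star u ⬝ᵥ v) := by
  simp [pdot, dotProduct, cstar_C]

lemma pdot_C_comp_eq_zero_of_coeff {g : Fin (n + 2) → ℂ[X]} {v : Fin (n + 2) → ℂ}
    (h : ∀ k, star (fun i => (g i).coeff k) ⬝ᵥ v = 0) : pdot n g (C ∘ v) = 0 := by
  ext k
  simpa [pdot, dotProduct, finsetSum_coeff, cstar, coeff_mul_C] using h k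

lemma eq_zero_of_pdot_self_eq_zero {g : Fin (n + 2) → ℂ[X]} (h : pdot n g g = 0) : g = 0 := by
  -- on the real axis `g*g` evaluates to `Σ |gᵢ|²`
  have hroot (x : ℝ) : (fun i => (g i).eval (x : ℂ)) = 0 := by
    rw [← dotProduct_star_self_eq_zero]
    simpa [pdot, dotProduct, eval_finsetSum, eval_ofReal_cstar] using congrArg (eval (x : ℂ)) h
  funext i
  refine eq_zero_of_infinite_isRoot _
    ((Set.infinite_range_of_injective Complex.ofReal_injective).mono ?_)
  rintro _ ⟨x, rfl⟩
  exact congrFun (hroot x) i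

lemma Dm_mul_self : Dm n * Dm n = 1 := by
  rw [Dm, diagonal_mul_diagonal, ← diagonal_one]
  congr 1
  funext i
  split_ifs <;> norm_num

lemma Dm_mulVec_of_apply_zero {u : Fin (n + 2) → ℂ} (hu : u 0 = 0) : Dm n *ᵥ u = u := by
  funext i
  by_cases hi : i = 0 <;> simp [Dm, mulVec_diagonal, hi, hu]

lemma eq_of_star_dotProduct_Dm_mulVec_eq_zero {z z' : Fin (n + 2) → ℂ} (hz : z ∈ Xi n)
    (hz' : z' ∈ Xi n) (h : star z ⬝ᵥ Dm n *ᵥ z' = 0) : z = z' := by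
  have h' : star z' ⬝ᵥ Dm n *ᵥ z = 0 := by
    simpa [dotProduct, Dm, mulVec_diagonal, star_sum, apply_ite (starRingEnd ℂ), mul_comm]
      using congrArg star h
  have hu : star (z - z') ⬝ᵥ Dm n *ᵥ (z - z') = 0 := by
    simp [star_sub, sub_dotProduct, dotProduct_sub, mulVec_sub, hz.2, hz'.2, h, h']
  rwa [Dm_mulVec_of_apply_zero (by simp [hz.1, hz'.1]), dotProduct_star_self_eq_zero,
    sub_eq_zero] at hu

def Kmat (n : ℕ) (z : Fin (n + 2) → ℂ) (ψ : ℂ[X]) (g : Fin (n + 2) → ℂ[X]) : PM n :=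
  Matrix.of fun i j =>
    C (z i) * ψ * C (star (z j)) + (C (z i) * cstar (g j) - g i * C (star (z j)))

lemma gmat_eq_kmat (z : Fin (n + 2) → ℂ) (φ : ℂ[X]) (g : Fin (n + 2) → ℂ[X]) :
    Gmat n z φ g = (Dm n).map C * Kmat n z (φ - C (1 / 2 : ℂ) * pdot n g g) g + 1 := rfl

lemma kmat_eq_of_gmat_eq {z z' : Fin (n + 2) → ℂ} {φ φ' : ℂ[X]} {g g' : Fin (n + 2) → ℂ[X]}
    (h : Gmat n z φ g = Gmat n z' φ' g') :
    Kmat n z (φ - C (1 / 2 : ℂ) * pdot n g g) g =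
      Kmat n z' (φ' - C (1 / 2 : ℂ) * pdot n g' g') g' := by
  have hD : (Dm n).map C * (Dm n).map C = 1 := by
    rw [← Matrix.map_mul, Dm_mul_self, Matrix.map_one _ C.map_zero C.map_one]
  simpa [gmat_eq_kmat, ← Matrix.mul_assoc, hD] using congrArg (fun M => (Dm n).map C * (M - 1)) h

lemma kmat_mulVec (z : Fin (n + 2) → ℂ) (ψ : ℂ[X]) (g w : Fin (n + 2) → ℂ[X]) :
    Kmat n z ψ g *ᵥ w =
      (ψ * pdot n (C ∘ z) w + pdot n g w) • (C ∘ z) - pdot n (C ∘ z) w • g := by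
  funext i
  simp only [mulVec, dotProduct, Kmat, pdot, of_apply, Pi.sub_apply, Pi.smul_apply,
    Function.comp_apply, cstar_C, smul_eq_mul, Finset.mul_sum, Finset.sum_mul,
    ← Finset.sum_add_distrib, ← Finset.sum_sub_distrib]
  exact Finset.sum_congr rfl fun j _ => by ring

lemma kmat_mulVec_Dm_eq_zero {z : Fin (n + 2) → ℂ} (hz : z ∈ Xi n) (ψ : ℂ[X])
    {g : Fin (n + 2) → ℂ[X]} (hg : g ∈ DeltaZ n z) :
    Kmat n z ψ g *ᵥ (C ∘ (Dm n *ᵥ z)) = 0 := by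
  rw [kmat_mulVec, pdot_C_comp, hz.2, pdot_C_comp_eq_zero_of_coeff fun k => (hg.2 k).2]
  simp

lemma star_dotProduct_eq_zero_of_kmat_mulVec_eq_zero {z w : Fin (n + 2) → ℂ} {ψ : ℂ[X]}
    {g : Fin (n + 2) → ℂ[X]} (hz0 : z 0 = 1) (hgz : pdot n g (C ∘ z) = 0)
    (hψg : ¬(ψ = 0 ∧ g = 0)) (hw : Kmat n z ψ g *ᵥ (C ∘ w) = 0) : star z ⬝ᵥ w = 0 := by
  rw [kmat_mulVec, pdot_C_comp] at hw
  rw [← C_eq_zero]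
  by_cases hg : g = 0
  · subst hg
    have hψ : ψ ≠ 0 := fun hψ => hψg ⟨hψ, rfl⟩
    have h0 := congrFun hw 0
    simp only [pdot, cstar, Pi.zero_apply, Polynomial.map_zero, zero_mul, Finset.sum_const_zero,
      add_zero, smul_zero, sub_zero, Pi.smul_apply, Function.comp_apply, hz0, C_1, smul_eq_mul,
      mul_one] at h0
    exact (mul_eq_zero.mp h0).resolve_left hψ
  · have hgg := congrArg (pdot n g) hw
    simp only [pdot_eq_dotProduct, dotProduct_sub, dotProduct_smul, dotProduct_zero] at hgg
    rw [← pdot_eq_dotProduct, ← pdot_eq_dotProduct, hgz, smul_zero, zero_sub, neg_eq_zero,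
      smul_eq_mul] at hgg
    exact (mul_eq_zero.mp hgg).resolve_right (mt eq_zero_of_pdot_self_eq_zero hg)

lemma eq_and_eq_of_kmat_eq {z : Fin (n + 2) → ℂ} (hz : z ≠ 0) {ψ ψ' : ℂ[X]}
    {g g' : Fin (n + 2) → ℂ[X]} (hg : pdot n g (C ∘ z) = 0) (hg' : pdot n g' (C ∘ z) = 0)
    (h : Kmat n z ψ g = Kmat n z ψ' g') : ψ = ψ' ∧ g = g' := by
  set c := pdot n (C ∘ z) (C ∘ z) with hc_def
  have hc : c ≠ 0 := by
    rwa [hc_def, pdot_C_comp, Ne, C_eq_zero, dotProduct_star_self_eq_zero]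
  have hmul (ψ : ℂ[X]) (g) (hg : pdot n g (C ∘ z) = 0) :
      Kmat n z ψ g *ᵥ (C ∘ z) = c • (ψ • (C ∘ z) - g) := by
    rw [kmat_mulVec, hg, add_zero, smul_sub, smul_smul, mul_comm]
  have hpair (ψ : ℂ[X]) (g) (hg : pdot n g (C ∘ z) = 0) :
      pdot n (C ∘ z) (ψ • (C ∘ z) - g) = ψ * c := by
    rw [pdot_eq_dotProduct, dotProduct_sub, dotProduct_smul, ← pdot_eq_dotProduct,
      ← pdot_eq_dotProduct, ← cstar_pdot g (C ∘ z), hg]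
    simp [cstar, hc_def]
  have hv : ψ • (C ∘ z) - g = ψ' • (C ∘ z) - g' := smul_right_injective _ hc <| by
    simpa only [hmul _ _ hg, hmul _ _ hg'] using congrArg (· *ᵥ (C ∘ z)) h
  obtain rfl : ψ = ψ' :=
    mul_right_cancel₀ hc (by rw [← hpair ψ g hg, ← hpair ψ' g' hg', hv])
  exact ⟨rfl, sub_right_inj.mp hv⟩

end

theorem stmt6_general (n : ℕ)
    (z z' : Fin (n + 2) → ℂ) (hz : z ∈ Xi n) (hz' : z' ∈ Xi n)
    (φ φ' : ℂ[X])
    (g : Fin (n + 2) → ℂ[X]) (hg : g ∈ DeltaZ n z)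
    (g' : Fin (n + 2) → ℂ[X]) (hg' : g' ∈ DeltaZ n z')
    (hnt : ¬(φ = 0 ∧ g = 0))
    (heq : Gmat n z φ g = Gmat n z' φ' g') :
    z = z' ∧ φ = φ' ∧ g = g' := by
  have hK := kmat_eq_of_gmat_eq heq
  have hgz : pdot n g (C ∘ z) = 0 := pdot_C_comp_eq_zero_of_coeff fun k => (hg.2 k).1
  have hg'z' : pdot n g' (C ∘ z') = 0 := pdot_C_comp_eq_zero_of_coeff fun k => (hg'.2 k).1
  have hψg : ¬(φ - C (1 / 2 : ℂ) * pdot n g g = 0 ∧ g = 0) := fun ⟨hψ, hg0⟩ =>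
    hnt ⟨by simpa [hg0, pdot, cstar] using hψ, hg0⟩
  have hzz' : star z ⬝ᵥ Dm n *ᵥ z' = 0 :=
    star_dotProduct_eq_zero_of_kmat_mulVec_eq_zero hz.1 hgz hψg
      (by rw [hK]; exact kmat_mulVec_Dm_eq_zero hz' _ hg')
  obtain rfl := eq_of_star_dotProduct_Dm_mulVec_eq_zero hz hz' hzz'
  have hz0 : z ≠ 0 := fun h => by simpa [h] using hz.1
  obtain ⟨hψ, rfl⟩ := eq_and_eq_of_kmat_eq hz0 hgz hg'z' hK
  exact ⟨rfl, sub_left_inj.mp hψ, rfl⟩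

/-- Theorem 1, statement 4, injectivity: the map `(z,φ,g) ↦ G_z(φ,g)` is
one-to-one on the set of triples with `(φ,g) ≠ (0,0)`. -/
theorem stmt6 (n : ℕ)
    (z z' : Fin (n + 2) → ℂ) (hz : z ∈ Xi n) (hz' : z' ∈ Xi n)
    (φ φ' : ℂ[X]) (hφ : φ ∈ Phi) (hφ' : φ' ∈ Phi)
    (g : Fin (n + 2) → ℂ[X]) (hg : g ∈ DeltaZ n z)
    (g' : Fin (n + 2) → ℂ[X]) (hg' : g' ∈ DeltaZ n z')
    (hnt : ¬(φ = 0 ∧ g = 0)) (hnt' : ¬(φ' = 0 ∧ g' = 0))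
    (heq : Gmat n z φ g = Gmat n z' φ' g') :
    z = z' ∧ φ = φ' ∧ g = g' :=
  stmt6_general n z z' hz hz' φ φ' g hg g' hg' hnt heq
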